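/- arXiv:1507.02097 — 2 statements merged into one kernel-verified Lean document; each statement's English description precedes it below -/
import Mathlib

section
/- Let V be a complex inner product space with norm ‖·‖, and let a : V × V → ℂ be a sesquilinear form (linear in its first argument, conjugate-linear in its second). Assume there are constants C_c > 0, γ > 0 and Θ ∈ ℂ with |Θ| = 1 such that |a(u,w)| ≤ C_c·‖u‖·‖w‖ for all u, w ∈ V, and Im(Θ·a(v,v)) ≥ γ·‖v‖² for all v ∈ V. Let V₀, …, V_N be subspaces of V and let Q₀, …, Q_N : V → V be maps such that for each ℓ and each v ∈ V, Q_ℓ v ∈ V_ℓ and a(Q_ℓ v, w) = a(v, w) for all w ∈ V_ℓ. Let v ∈ V, and suppose there exist v₀ ∈ V₀, …, v_N ∈ V_N with v = ∑_{ℓ=0}^N v_ℓ and ∑_{ℓ=0}^N ‖v_ℓ‖² ≤ C_s·‖v‖² for some C_s > 0. Then γ·‖v‖² ≤ C_c·√C_s·(∑_{ℓ=0}^N ‖Q_ℓ v‖²)^{1/2}·‖v‖; in particular (∑_{ℓ=0}^N ‖Q_ℓ v‖²)^{1/2} ≥ (γ/(C_c·√C_s))·‖v‖. -/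
/-!
Testing the splitting `v = ∑ v_ℓ` against `v` and using the Galerkin property of each `Q_ℓ`
gives `a(v, v) = ∑ a(Q_ℓ v, v_ℓ)`. Coercivity bounds the left side below by `γ‖v‖²`; continuity
and Cauchy–Schwarz bound the right side by `C_c (∑ ‖Q_ℓ v‖²)^{1/2} (∑ ‖v_ℓ‖²)^{1/2}`, and the
stability of the splitting turns the last factor into `√C_s ‖v‖`.
-/

open Finset

theorem Complex.im_mul_le_norm_of_norm_eq_one {θ : ℂ} (hθ : ‖θ‖ = 1) (z : ℂ) :
    (θ * z).im ≤ ‖z‖ := by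
  simpa [hθ] using Complex.im_le_norm (θ * z)

theorem norm_sum_le_mul_sqrt_mul_sqrt_of_bounded {ι E F G : Type*} [Norm E] [Norm F]
    [SeminormedAddCommGroup G] (b : E → F → G) {C : ℝ} (hC : 0 ≤ C)
    (hb : ∀ u w, ‖b u w‖ ≤ C * ‖u‖ * ‖w‖) (s : Finset ι) (u : ι → E) (w : ι → F) :
    ‖∑ i ∈ s, b (u i) (w i)‖ ≤
      C * √(∑ i ∈ s, ‖u i‖ ^ 2) * √(∑ i ∈ s, ‖w i‖ ^ 2) :=
  calc ‖∑ i ∈ s, b (u i) (w i)‖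
      ≤ ∑ i ∈ s, C * (‖u i‖ * ‖w i‖) :=
        (norm_sum_le _ _).trans <| sum_le_sum fun _ _ => (hb _ _).trans_eq (mul_assoc _ _ _)
    _ = C * ∑ i ∈ s, ‖u i‖ * ‖w i‖ := (mul_sum _ _ _).symm
    _ ≤ C * (√(∑ i ∈ s, ‖u i‖ ^ 2) * √(∑ i ∈ s, ‖w i‖ ^ 2)) :=
        mul_le_mul_of_nonneg_left (Real.sum_mul_le_sqrt_mul_sqrt _ _ _) hC
    _ = _ := (mul_assoc _ _ _).symm

theorem div_mul_le_of_mul_sq_le_mul {γ K x y : ℝ} (hK : 0 < K) (hx : 0 ≤ x) (hy : 0 ≤ y)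
    (h : γ * x ^ 2 ≤ K * y * x) : γ / K * x ≤ y := by
  rcases hx.eq_or_lt with rfl | hx
  · simpa using hy
  · rw [div_mul_eq_mul_div, div_le_iff₀ hK]
    nlinarith

theorem stmt_7_general {V : Type*} [NormedAddCommGroup V] [InnerProductSpace ℂ V]
    (a : V → V → ℂ)
    (ha_add_right : ∀ u w₁ w₂, a u (w₁ + w₂) = a u w₁ + a u w₂)
    (Cc γ : ℝ) (hCc : 0 < Cc)
    (Θ : ℂ) (hΘ : ‖Θ‖ = 1)
    (hcont : ∀ u w, ‖a u w‖ ≤ Cc * ‖u‖ * ‖w‖)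
    (hcoer : ∀ v : V, γ * ‖v‖ ^ 2 ≤ (Θ * a v v).im)
    (N : ℕ) (Vs : ℕ → Submodule ℂ V) (Q : ℕ → V → V)
    (hQproj : ∀ ℓ ≤ N, ∀ v : V, ∀ w ∈ Vs ℓ, a (Q ℓ v) w = a v w)
    (v : V) (vs : ℕ → V) (hvs_mem : ∀ ℓ ≤ N, vs ℓ ∈ Vs ℓ)
    (hsplit : v = ∑ ℓ ∈ Finset.range (N + 1), vs ℓ)
    (Cs : ℝ) (hCs : 0 < Cs)
    (hstable : ∑ ℓ ∈ Finset.range (N + 1), ‖vs ℓ‖ ^ 2 ≤ Cs * ‖v‖ ^ 2) :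
    γ * ‖v‖ ^ 2 ≤
      Cc * Real.sqrt Cs *
        Real.sqrt (∑ ℓ ∈ Finset.range (N + 1), ‖Q ℓ v‖ ^ 2) * ‖v‖ ∧
    (γ / (Cc * Real.sqrt Cs)) * ‖v‖ ≤
      Real.sqrt (∑ ℓ ∈ Finset.range (N + 1), ‖Q ℓ v‖ ^ 2) := by
  have hgalerkin : a v v = ∑ ℓ ∈ range (N + 1), a (Q ℓ v) (vs ℓ) :=
    calc a v v = a v (∑ ℓ ∈ range (N + 1), vs ℓ) := congrArg (a v) hsplit
      _ = ∑ ℓ ∈ range (N + 1), a v (vs ℓ) := map_sum (AddMonoidHom.mk' (a v) (ha_add_right v)) _ _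
      _ = _ := sum_congr rfl fun ℓ hℓ => by
        have hℓN : ℓ ≤ N := Nat.lt_succ_iff.mp (mem_range.mp hℓ)
        exact (hQproj ℓ hℓN v _ (hvs_mem ℓ hℓN)).symm
  have hstable_sqrt : √(∑ ℓ ∈ range (N + 1), ‖vs ℓ‖ ^ 2) ≤ √Cs * ‖v‖ := by
    simpa [Real.sqrt_mul hCs.le, Real.sqrt_sq (norm_nonneg v)] using Real.sqrt_le_sqrt hstable
  have hmain : γ * ‖v‖ ^ 2 ≤ Cc * √Cs * √(∑ ℓ ∈ range (N + 1), ‖Q ℓ v‖ ^ 2) * ‖v‖ :=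
    calc γ * ‖v‖ ^ 2 ≤ ‖a v v‖ := (hcoer v).trans (Complex.im_mul_le_norm_of_norm_eq_one hΘ _)
      _ ≤ Cc * √(∑ ℓ ∈ range (N + 1), ‖Q ℓ v‖ ^ 2) * √(∑ ℓ ∈ range (N + 1), ‖vs ℓ‖ ^ 2) :=
        hgalerkin ▸ norm_sum_le_mul_sqrt_mul_sqrt_of_bounded a hCc.le hcont _ _ _
      _ ≤ Cc * √(∑ ℓ ∈ range (N + 1), ‖Q ℓ v‖ ^ 2) * (√Cs * ‖v‖) := by gcongr
      _ = _ := by ring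
  exact ⟨hmain, div_mul_le_of_mul_sq_le_mul (mul_pos hCc (Real.sqrt_pos.mpr hCs))
    (norm_nonneg v) (Real.sqrt_nonneg _) hmain⟩

/-- Abstract form of the paper's Lemma 4.4 (lower bound on the ℓ²-sum of the local
projections): under continuity and coercivity of the sesquilinear form `a` and a
stable splitting `v = ∑ v_ℓ` with `∑ ‖v_ℓ‖² ≤ C_s ‖v‖²`, one has
`γ‖v‖² ≤ C_c √C_s (∑ ‖Q_ℓ v‖²)^{1/2} ‖v‖`, and in particular
`(∑ ‖Q_ℓ v‖²)^{1/2} ≥ (γ/(C_c √C_s)) ‖v‖`. -/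
theorem stmt_7 {V : Type*} [NormedAddCommGroup V] [InnerProductSpace ℂ V]
    (a : V → V → ℂ)
    (ha_add_left : ∀ u₁ u₂ w, a (u₁ + u₂) w = a u₁ w + a u₂ w)
    (ha_smul_left : ∀ (c : ℂ) u w, a (c • u) w = c * a u w)
    (ha_add_right : ∀ u w₁ w₂, a u (w₁ + w₂) = a u w₁ + a u w₂)
    (ha_smul_right : ∀ (c : ℂ) u w, a u (c • w) = (starRingEnd ℂ) c * a u w)
    (Cc γ : ℝ) (hCc : 0 < Cc) (hγ : 0 < γ)
    (Θ : ℂ) (hΘ : ‖Θ‖ = 1)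
    (hcont : ∀ u w, ‖a u w‖ ≤ Cc * ‖u‖ * ‖w‖)
    (hcoer : ∀ v : V, γ * ‖v‖ ^ 2 ≤ (Θ * a v v).im)
    (N : ℕ) (Vs : ℕ → Submodule ℂ V) (Q : ℕ → V → V)
    (hQmem : ∀ ℓ ≤ N, ∀ v : V, Q ℓ v ∈ Vs ℓ)
    (hQproj : ∀ ℓ ≤ N, ∀ v : V, ∀ w ∈ Vs ℓ, a (Q ℓ v) w = a v w)
    (v : V) (vs : ℕ → V) (hvs_mem : ∀ ℓ ≤ N, vs ℓ ∈ Vs ℓ)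
    (hsplit : v = ∑ ℓ ∈ Finset.range (N + 1), vs ℓ)
    (Cs : ℝ) (hCs : 0 < Cs)
    (hstable : ∑ ℓ ∈ Finset.range (N + 1), ‖vs ℓ‖ ^ 2 ≤ Cs * ‖v‖ ^ 2) :
    γ * ‖v‖ ^ 2 ≤
      Cc * Real.sqrt Cs *
        Real.sqrt (∑ ℓ ∈ Finset.range (N + 1), ‖Q ℓ v‖ ^ 2) * ‖v‖ ∧
    (γ / (Cc * Real.sqrt Cs)) * ‖v‖ ≤
      Real.sqrt (∑ ℓ ∈ Finset.range (N + 1), ‖Q ℓ v‖ ^ 2) :=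
  stmt_7_general a ha_add_right Cc γ hCc Θ hΘ hcont hcoer N Vs Q hQproj v vs hvs_mem hsplit Cs hCs
    hstable
end

section
/- Let V be a complex inner product space and C : V → V a linear map. Suppose there are constants d > 0 and M > 0 such that |⟪x, Cx⟫| ≥ d·‖x‖² and ‖Cx‖ ≤ M·‖x‖ for all x ∈ V. Then for every r⁰ ∈ V and every m ∈ ℕ there exists x in the span of {C^j r⁰ : 0 ≤ j ≤ m−1} (the m-th Krylov space K^m(C, r⁰)) such that ‖r⁰ − Cx‖² ≤ (1 − d²/M²)^m · ‖r⁰‖². -/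
/-!
Compare GMRES with the cheaper method that, from the current residual `r`, takes one
minimal-residual step along `C r`: the optimal step `r - (⟪C r, r⟫ / ‖C r‖²) • C r` has squared
norm `‖r‖² - |⟪C r, r⟫|² / ‖C r‖²`, and the two bounds on `C` make the subtracted term at least
`(d / M)² ‖r‖²`. The iterates of this method stay in the Krylov spaces, so `m` such steps give an
element of `K^m(C, r⁰)` with the claimed residual.
-/

open Submodule

section Krylov

variable {R M : Type*} [Ring R] [AddCommGroup M] [Module R M]

def krylovSpace (C : Module.End R M) (r : M) (m : ℕ) : Submodule R M :=
  span R {y | ∃ j < m, y = (C ^ j) r}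

variable (C : Module.End R M) (r : M)

theorem krylovSpace_mono : Monotone (krylovSpace C r) :=
  fun _ _ hmn => span_mono fun _ ⟨j, hj, hy⟩ => ⟨j, hj.trans_le hmn, hy⟩

theorem self_mem_krylovSpace_succ (m : ℕ) : r ∈ krylovSpace C r (m + 1) :=
  subset_span ⟨0, m.succ_pos, by simp⟩

theorem apply_mem_krylovSpace_succ {m : ℕ} {x : M} (hx : x ∈ krylovSpace C r m) :
    C x ∈ krylovSpace C r (m + 1) := by
  refine span_mono ?_ (apply_mem_span_image_of_mem_span C hx)
  rintro _ ⟨_, ⟨j, hj, rfl⟩, rfl⟩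
  exact ⟨j + 1, Nat.succ_lt_succ hj, by rw [pow_succ', Module.End.mul_apply]⟩

end Krylov

section InnerProductSpace

variable {𝕜 E : Type*} [RCLike 𝕜] [NormedAddCommGroup E] [InnerProductSpace 𝕜 E]

theorem norm_sub_inner_div_smul_sq (r t : E) :
    ‖r - (inner 𝕜 t r / (‖t‖ ^ 2 : 𝕜)) • t‖ ^ 2 = ‖r‖ ^ 2 - ‖inner 𝕜 t r‖ ^ 2 / ‖t‖ ^ 2 := by
  obtain rfl | ht := eq_or_ne t 0
  · simp
  have hcross : RCLike.re (inner 𝕜 r ((inner 𝕜 t r / (‖t‖ ^ 2 : 𝕜)) • t)) =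
      ‖inner 𝕜 t r‖ ^ 2 / ‖t‖ ^ 2 := by
    rw [inner_smul_right, ← inner_conj_symm r t, div_mul_eq_mul_div, RCLike.mul_conj]
    norm_cast
  have hsmul : ‖(inner 𝕜 t r / (‖t‖ ^ 2 : 𝕜)) • t‖ ^ 2 = ‖inner 𝕜 t r‖ ^ 2 / ‖t‖ ^ 2 := by
    rw [norm_smul, norm_div, norm_pow, RCLike.norm_ofReal, abs_norm]
    field_simp [norm_ne_zero_iff.mpr ht]
  rw [@norm_sub_sq 𝕜, hcross, hsmul]
  ring

variable (C : E →ₗ[𝕜] E)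

theorem exists_mem_krylovSpace_norm_sub_sq_le {c : ℝ}
    (hstep : ∀ r : E, ∃ α : 𝕜, ‖r - α • C r‖ ^ 2 ≤ c * ‖r‖ ^ 2) (r0 : E) (m : ℕ) :
    ∃ x ∈ krylovSpace C r0 m, ‖r0 - C x‖ ^ 2 ≤ c ^ m * ‖r0‖ ^ 2 := by
  obtain rfl | hr0 := eq_or_ne r0 0
  · exact ⟨0, zero_mem _, by simp⟩
  have hc : 0 ≤ c := by
    obtain ⟨α, hα⟩ := hstep r0
    exact nonneg_of_mul_nonneg_left ((sq_nonneg _).trans hα) (by positivity)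
  induction m with
  | zero => exact ⟨0, zero_mem _, by simp⟩
  | succ m ih =>
    obtain ⟨x, hx, hres⟩ := ih
    obtain ⟨α, hα⟩ := hstep (r0 - C x)
    have hr_mem : r0 - C x ∈ krylovSpace C r0 (m + 1) :=
      sub_mem (self_mem_krylovSpace_succ C r0 m) (apply_mem_krylovSpace_succ C r0 hx)
    refine ⟨x + α • (r0 - C x),
      add_mem (krylovSpace_mono C r0 m.le_succ hx) (smul_mem _ α hr_mem), ?_⟩
    calc ‖r0 - C (x + α • (r0 - C x))‖ ^ 2 = ‖(r0 - C x) - α • C (r0 - C x)‖ ^ 2 := by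
          rw [map_add, map_smul, sub_add_eq_sub_sub]
      _ ≤ c * ‖r0 - C x‖ ^ 2 := hα
      _ ≤ c * (c ^ m * ‖r0‖ ^ 2) := by gcongr
      _ = c ^ (m + 1) * ‖r0‖ ^ 2 := by ring

variable {d M : ℝ}

theorem sq_div_sq_mul_norm_sq_le (hd : 0 ≤ d)
    (hfov : ∀ x : E, d * ‖x‖ ^ 2 ≤ ‖inner 𝕜 x (C x)‖) (hnorm : ∀ x : E, ‖C x‖ ≤ M * ‖x‖)
    (r : E) :
    d ^ 2 / M ^ 2 * ‖r‖ ^ 2 ≤ ‖inner 𝕜 (C r) r‖ ^ 2 / ‖C r‖ ^ 2 := by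
  have hlow : d * ‖r‖ ^ 2 ≤ ‖inner 𝕜 (C r) r‖ := norm_inner_symm (𝕜 := 𝕜) r (C r) ▸ hfov r
  obtain hCr | hCr := eq_or_ne (C r) 0
  · have hdr : d * ‖r‖ ^ 2 ≤ 0 := by simpa [hCr] using hlow
    calc d ^ 2 / M ^ 2 * ‖r‖ ^ 2 = d / M ^ 2 * (d * ‖r‖ ^ 2) := by ring
      _ ≤ 0 := mul_nonpos_of_nonneg_of_nonpos (by positivity) hdr
      _ = _ := by simp [hCr]
  have hCr_pos : 0 < ‖C r‖ := norm_pos_iff.mpr hCr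
  have hM : 0 < M := by nlinarith [norm_nonneg r, hnorm r]
  rw [div_mul_eq_mul_div, div_le_div_iff₀ (by positivity) (by positivity)]
  have hCr_sq : ‖C r‖ ^ 2 ≤ M ^ 2 * ‖r‖ ^ 2 := by
    rw [← mul_pow]
    exact pow_le_pow_left₀ (norm_nonneg _) (hnorm r) 2
  have hlow_sq : (d * ‖r‖ ^ 2) ^ 2 ≤ ‖inner 𝕜 (C r) r‖ ^ 2 :=
    pow_le_pow_left₀ (by positivity) hlow 2
  calc d ^ 2 * ‖r‖ ^ 2 * ‖C r‖ ^ 2 ≤ d ^ 2 * ‖r‖ ^ 2 * (M ^ 2 * ‖r‖ ^ 2) := by gcongr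
    _ = (d * ‖r‖ ^ 2) ^ 2 * M ^ 2 := by ring
    _ ≤ ‖inner 𝕜 (C r) r‖ ^ 2 * M ^ 2 := by gcongr

theorem exists_norm_sub_smul_apply_sq_le (hd : 0 ≤ d)
    (hfov : ∀ x : E, d * ‖x‖ ^ 2 ≤ ‖inner 𝕜 x (C x)‖) (hnorm : ∀ x : E, ‖C x‖ ≤ M * ‖x‖)
    (r : E) :
    ∃ α : 𝕜, ‖r - α • C r‖ ^ 2 ≤ (1 - d ^ 2 / M ^ 2) * ‖r‖ ^ 2 := by
  refine ⟨inner 𝕜 (C r) r / (‖C r‖ ^ 2 : 𝕜), ?_⟩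
  rw [norm_sub_inner_div_smul_sq]
  linarith [sq_div_sq_mul_norm_sq_le C hd hfov hnorm r]

end InnerProductSpace

theorem stmt_12_general {V : Type*} [NormedAddCommGroup V] [InnerProductSpace ℂ V]
    (C : V →ₗ[ℂ] V) (d M : ℝ) (hd : 0 < d)
    (hfov : ∀ x : V, d * ‖x‖ ^ 2 ≤ ‖(inner ℂ x (C x) : ℂ)‖)
    (hnorm : ∀ x : V, ‖C x‖ ≤ M * ‖x‖)
    (r0 : V) (m : ℕ) :
    ∃ x ∈ Submodule.span ℂ {y : V | ∃ j < m, y = (C ^ j) r0},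
      ‖r0 - C x‖ ^ 2 ≤ (1 - d ^ 2 / M ^ 2) ^ m * ‖r0‖ ^ 2 :=
  exists_mem_krylovSpace_norm_sub_sq_le C
    (exists_norm_sub_smul_apply_sq_le C hd.le hfov hnorm) r0 m

/-- The paper's Theorem 5.1 (Elman/Eisenstat–Elman–Schultz GMRES convergence
estimate): if the field of values of `C` is at distance at least `d > 0` from the
origin and `‖C‖ ≤ M`, then for every `r⁰` and `m` there exists `x` in the `m`-th
Krylov space `K^m(C, r⁰) = span {C^j r⁰ : 0 ≤ j ≤ m-1}` with
`‖r⁰ - C x‖² ≤ (1 - d²/M²)^m ‖r⁰‖²`. -/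
theorem stmt_12 {V : Type*} [NormedAddCommGroup V] [InnerProductSpace ℂ V]
    (C : V →ₗ[ℂ] V) (d M : ℝ) (hd : 0 < d) (hM : 0 < M)
    (hfov : ∀ x : V, d * ‖x‖ ^ 2 ≤ ‖(inner ℂ x (C x) : ℂ)‖)
    (hnorm : ∀ x : V, ‖C x‖ ≤ M * ‖x‖)
    (r0 : V) (m : ℕ) :
    ∃ x ∈ Submodule.span ℂ {y : V | ∃ j < m, y = (C ^ j) r0},
      ‖r0 - C x‖ ^ 2 ≤ (1 - d ^ 2 / M ^ 2) ^ m * ‖r0‖ ^ 2 :=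
  stmt_12_general C d M hd hfov hnorm r0 m
end
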